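/- arXiv:2506.04773 — 4 statements merged into one kernel-verified Lean document; each statement's English description precedes it below -/
import Mathlib

section
/- Let p be a prime with p-adic expansion n = Σ_{i=1}^t a_i p^{k_i} where k_1 > ... > k_t ≥ 0 and 1 ≤ a_i ≤ p-1. Then a Sylow p-subgroup of S_n is isomorphic to the direct product of a_i copies of a Sylow p-subgroup of S_{p^{k_i}}, for i = 1, ..., t. -/
open Equiv Finset

/-- bound lemma -/
lemma sum_pow_lt {p : ℕ} (hp : 2 ≤ p) :
    ∀ (t : ℕ) (k a : Fin t → ℕ), StrictAnti k → (∀ i, a i ≤ p - 1) →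
    ∀ K : ℕ, (∀ i, k i < K) → ∑ i, a i * p ^ k i < p ^ K := by
  intro t
  induction t with
  | zero =>
    intro k a _ _ K _
    simpa using pow_pos (show 0 < p by omega) K
  | succ t ih =>
    intro k a hk ha K hK
    rw [Fin.sum_univ_succ]
    have hrest : ∑ i : Fin t, a i.succ * p ^ k i.succ < p ^ k 0 :=
      ih (k ∘ Fin.succ) (a ∘ Fin.succ)
        (hk.comp_strictMono (Fin.strictMono_succ))
        (fun i => ha i.succ) (k 0) (fun i => hk (Fin.succ_pos i))
    have h1 : a 0 * p ^ k 0 + ∑ i : Fin t, a i.succ * p ^ k i.succ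
        < (a 0 + 1) * p ^ k 0 := by
      rw [add_mul, one_mul]; omega
    have h2 : (a 0 + 1) * p ^ k 0 ≤ p ^ (k 0 + 1) := by
      rw [pow_succ, mul_comm (p ^ k 0) p]
      exact Nat.mul_le_mul_right _ (by have := ha 0; omega)
    have h3 : p ^ (k 0 + 1) ≤ p ^ K :=
      Nat.pow_le_pow_right (by omega) (hK 0)
    omega

lemma digsum_add {p : ℕ} (hp : 2 ≤ p) {m K d : ℕ} (hm : m < p ^ K) (hd : d < p) :
    (p.digits (m + p ^ K * d)).sum = (p.digits m).sum + d := by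
  rcases Nat.eq_zero_or_pos d with rfl | hd0
  · simp
  rcases Nat.eq_zero_or_pos m with rfl | hm0
  · rw [zero_add, Nat.digits_base_pow_mul (by omega) hd0,
      Nat.digits_of_lt p d hd0.ne' hd]
    simp
  · have hlen : (p.digits m).length ≤ K := by
      rw [Nat.digits_len p m (by omega) hm0.ne']
      have : Nat.log p m < K := Nat.log_lt_of_lt_pow hm0.ne' hm
      omega
    have key := Nat.digits_append_zeroes_append_digits
      (b := p) (k := K - (p.digits m).length) (m := d) (n := m) (by omega) hd0
    rw [Nat.add_sub_cancel' hlen] at key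
    rw [← key, Nat.digits_of_lt p d hd0.ne' hd]
    simp

lemma digsum_rep {p : ℕ} (hp : 2 ≤ p) :
    ∀ (t : ℕ) (k a : Fin t → ℕ), StrictAnti k → (∀ i, 1 ≤ a i ∧ a i ≤ p - 1) →
    (p.digits (∑ i, a i * p ^ k i)).sum = ∑ i, a i := by
  intro t
  induction t with
  | zero => intro k a _ _; simp
  | succ t ih =>
    intro k a hk ha
    rw [Fin.sum_univ_succ, Fin.sum_univ_succ (f := a)]
    have hrest : ∑ i : Fin t, a i.succ * p ^ k i.succ < p ^ k 0 :=
      sum_pow_lt hp t (k ∘ Fin.succ) (a ∘ Fin.succ)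
        (hk.comp_strictMono (Fin.strictMono_succ))
        (fun i => (ha i.succ).2) (k 0) (fun i => hk (Fin.succ_pos i))
    have hd : a 0 < p := by have := (ha 0).2; omega
    rw [add_comm (a 0 * p ^ k 0), mul_comm (a 0)]
    rw [digsum_add hp hrest hd,
      ih (fun i => k i.succ) (fun i => a i.succ)
        (hk.comp_strictMono (Fin.strictMono_succ)) (fun i => ha i.succ)]
    omega

lemma digsum_pow {p : ℕ} (hp : 2 ≤ p) (K : ℕ) : (p.digits (p ^ K)).sum = 1 := by
  have h : p ^ K = p ^ K * 1 := (mul_one _).symm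
  rw [h, Nat.digits_base_pow_mul (by omega) one_pos,
    Nat.digits_of_lt p 1 one_ne_zero (by omega)]
  simp

lemma val_sum {p : ℕ} (hp : p.Prime) (t : ℕ) (k a : Fin t → ℕ) (hk : StrictAnti k)
    (ha : ∀ i, 1 ≤ a i ∧ a i ≤ p - 1) :
    ∑ i, a i * padicValNat p (Nat.factorial (p ^ k i)) =
      padicValNat p (Nat.factorial (∑ i, a i * p ^ k i)) := by
  haveI : Fact p.Prime := ⟨hp⟩
  have hp2 := hp.two_le
  apply Nat.eq_of_mul_eq_mul_left (show 0 < p - 1 by omega)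
  rw [sub_one_mul_padicValNat_factorial, digsum_rep hp2 t k a hk ha, Finset.mul_sum]
  have step : ∀ i : Fin t, (p - 1) * (a i * padicValNat p (Nat.factorial (p ^ k i)))
      = a i * p ^ k i - a i := by
    intro i
    rw [mul_left_comm, sub_one_mul_padicValNat_factorial, digsum_pow hp2 (k i),
      Nat.mul_sub, mul_one]
  simp only [step]
  rw [Finset.sum_tsub_distrib _ (fun i _ =>
    Nat.le_mul_of_pos_right _ (pow_pos (show 0 < p by omega) _))]

open Equiv in
def permCongrMulEquiv {α β : Type*} (e : α ≃ β) : Perm α ≃* Perm β :=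
  { Equiv.permCongr e with
    map_mul' := fun x y => by
      ext b
      simp [Equiv.permCongr_apply, Equiv.Perm.mul_apply] }

def piCurryMulEquiv {α : Type*} {β : α → Type*} (γ : ∀ a, β a → Type*)
    [∀ a b, Mul (γ a b)] : ((x : Σ a, β a) → γ x.1 x.2) ≃* ∀ a, ∀ b, γ a b :=
  { Equiv.piCurry γ with map_mul' := fun _ _ => rfl }

def subgroupPiEquiv {ι : Type*} {G : ι → Type*} [∀ i, Group (G i)] (H : ∀ i, Subgroup (G i)) :
    ↥(Subgroup.pi Set.univ H) ≃* ∀ i, ↥(H i) where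
  toFun g i := ⟨g.1 i, g.2 i (Set.mem_univ i)⟩
  invFun g := ⟨fun i => (g i).1, fun i _ => (g i).2⟩
  left_inv _ := rfl
  right_inv _ := rfl
  map_mul' _ _ := rfl

/-- If `n = Σ aᵢ p^{kᵢ}` is the `p`-adic expansion of `n`, then a Sylow `p`-subgroup of `S_n`
is isomorphic to the direct product, over `i`, of `aᵢ` copies of a Sylow `p`-subgroup
of `S_{p^{kᵢ}}`. -/
theorem sylow_symmetricGroup_directProduct (p n t : ℕ) (hp : p.Prime)
    (k a : Fin t → ℕ) (hk : StrictAnti k) (ha : ∀ i, 1 ≤ a i ∧ a i ≤ p - 1)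
    (hn : n = ∑ i, a i * p ^ k i)
    (P : Sylow p (Equiv.Perm (Fin n)))
    (Q : ∀ i : Fin t, Sylow p (Equiv.Perm (Fin (p ^ k i)))) :
    Nonempty (↥(P : Subgroup (Equiv.Perm (Fin n))) ≃*
      ∀ i : Fin t, (Fin (a i) → ↥(Q i : Subgroup (Equiv.Perm (Fin (p ^ k i)))))) := by
  classical
  haveI : Fact p.Prime := ⟨hp⟩
  set ι := (i : Fin t) × Fin (a i) with hι
  let β : ι → Type := fun x => Fin (p ^ k x.1)
  have hcard : Fintype.card ((x : ι) × β x) = n := by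
    rw [Fintype.card_sigma, hn, ← Finset.univ_sigma_univ, Finset.sum_sigma]
    simp [β, mul_comm]
  let e : Fin n ≃ (x : ι) × β x := Fintype.equivOfCardEq (by simp [hcard])
  let Φ : ((x : ι) → Equiv.Perm (β x)) →* Equiv.Perm (Fin n) :=
    (permCongrMulEquiv e.symm).toMonoidHom.comp (Equiv.Perm.sigmaCongrRightHom β)
  have hΦ : Function.Injective Φ :=
    (permCongrMulEquiv e.symm).injective.comp Equiv.Perm.sigmaCongrRightHom_injective
  let K : Subgroup ((x : ι) → Equiv.Perm (β x)) :=
    Subgroup.pi Set.univ fun x => (Q x.1 : Subgroup _)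
  let eK : ↥K ≃* ((x : ι) → ↥(Q x.1 : Subgroup (Equiv.Perm (Fin (p ^ k x.1))))) :=
    subgroupPiEquiv (G := fun x : ι => Equiv.Perm (Fin (p ^ k x.1)))
      (fun x => (Q x.1 : Subgroup (Equiv.Perm (Fin (p ^ k x.1)))))
  have hfact : ∀ m : ℕ, Nat.card (Equiv.Perm (Fin m)) = m.factorial := fun m => by
    simp [Nat.card_eq_fintype_card, Fintype.card_perm]
  have hKcard : Nat.card ↥(K.map Φ)
      = p ^ (Nat.card (Equiv.Perm (Fin n))).factorization p := by
    rw [Nat.card_congr (K.equivMapOfInjective Φ hΦ).toEquiv.symm,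
      Nat.card_congr eK.toEquiv, Nat.card_pi]
    have hq : ∀ x : ι, Nat.card ↥(Q x.1 : Subgroup (Equiv.Perm (Fin (p ^ k x.1))))
        = p ^ padicValNat p (Nat.factorial (p ^ k x.1)) := fun x => by
      have h := (Q x.1).card_eq_multiplicity
      rw [hfact, Nat.factorization_def _ hp] at h
      exact h
    simp only [hq]
    rw [Finset.prod_pow_eq_pow_sum, hfact, Nat.factorization_def _ hp, hn]
    congr 1
    rw [← val_sum hp t k a hk ha, ← Finset.univ_sigma_univ, Finset.sum_sigma]
    simp [mul_comm]
  let R : Sylow p (Equiv.Perm (Fin n)) := Sylow.ofCard (K.map Φ) hKcard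
  exact ⟨(Sylow.equiv P R).trans
    ((K.equivMapOfInjective Φ hΦ).symm.trans (eK.trans (piCurryMulEquiv
      (fun (i : Fin t) (_ : Fin (a i)) => ↥(Q i : Subgroup (Equiv.Perm (Fin (p ^ k i))))))))⟩
end

section
/- Let G be a finite group, p a prime, and φ an irreducible character of G. Then the induction of φ^{×p} from G^{×p} to G ≀ C_p decomposes as the sum over ε ∈ {0,...,p-1} of the irreducible characters X(φ; φ_ε), where φ_ε runs over the p linear characters of C_p; in particular this induced character has exactly p irreducible constituents, each with multiplicity one. -/
open CategoryTheory

section Helpers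

universe u
variable {k H : Type u} [Field k] [Group H]

noncomputable def twist (μ : H →* kˣ) (V : FDRep k H) : FDRep k H := FDRep.of
  { toFun := fun h => (μ h : k) • V.ρ h
    map_one' := by simp
    map_mul' := fun a b => by simp only [map_mul, Units.val_mul, smul_mul_smul_comm] }

theorem twist_char (μ : H →* kˣ) (V : FDRep k H) (h : H) :
    (twist μ V).character h = (μ h : k) * V.character h := by
  show LinearMap.trace k _ ((μ h : k) • V.ρ h) = (μ h : k) * LinearMap.trace k _ (V.ρ h)
  rw [map_smul, smul_eq_mul]

noncomputable def twistMap (μ : H →* kˣ) {A B : FDRep k H} (f : A ⟶ B) : twist μ A ⟶ twist μ B where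
  hom := f.hom
  comm h := by
    have hc' := congrArg (fun x => x.hom.hom) (f.comm h)
    ext x
    have := LinearMap.congr_fun hc' x
    change f.hom.hom.hom (FDRep.ρ A h x) = FDRep.ρ B h (f.hom.hom.hom x) at this
    change f.hom.hom.hom (((μ h : k) • FDRep.ρ A h) x) = ((μ h : k) • FDRep.ρ B h) (f.hom.hom.hom x)
    erw [LinearMap.smul_apply, map_smul, this]
    rfl

noncomputable def twistTwistIso (μ ν : H →* kˣ) (hμν : ∀ h, (μ h : k) * ν h = 1) (V : FDRep k H) :
    twist μ (twist ν V) ≅ V where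
  hom := { hom := 𝟙 V.V, comm := fun h => by
            ext x
            change ((μ h : k) • ((ν h : k) • FDRep.ρ V h)) x = FDRep.ρ V h x
            rw [smul_smul, hμν, one_smul] }
  inv := { hom := 𝟙 V.V, comm := fun h => by
            ext x
            change FDRep.ρ V h x = ((μ h : k) • ((ν h : k) • FDRep.ρ V h)) x
            rw [smul_smul, hμν, one_smul] }
  hom_inv_id := by ext; rfl
  inv_hom_id := by ext; rfl

theorem twist_simple (μ : H →* kˣ) (V : FDRep k H) [hs : Simple V] : Simple (twist μ V) := by
  have hμν : ∀ h, (μ h : k) * (μ⁻¹ h : kˣ) = 1 := fun h => by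
    rw [MonoidHom.inv_apply, ← Units.val_mul, mul_inv_cancel, Units.val_one]
  have hνμ : ∀ h, ((μ⁻¹ h : kˣ) : k) * μ h = 1 := fun h => by
    rw [MonoidHom.inv_apply, ← Units.val_mul, inv_mul_cancel, Units.val_one]
  constructor
  intro Y f mf
  set f' : twist μ⁻¹ Y ⟶ V := twistMap μ⁻¹ f ≫ (twistTwistIso μ⁻¹ μ hνμ V).hom with hf'
  constructor
  · rintro hiso rfl
    have h1 : 𝟙 (twist μ V) = (0 : twist μ V ⟶ twist μ V) := by
      calc 𝟙 (twist μ V) = inv (0 : Y ⟶ twist μ V) ≫ 0 := (IsIso.inv_hom_id _).symm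
      _ = 0 := by simp
    have h2 : 𝟙 V = (0 : V ⟶ V) := by
      apply Action.Hom.ext
      have := congrArg Action.Hom.hom h1
      exact this
    exact id_nonzero V h2
  · intro hf
    have mf' : Mono f' := by
      constructor
      intro Z g h w
      have w' : g.hom ≫ f.hom = h.hom ≫ f.hom := by
        have := congrArg Action.Hom.hom w
        exact this
      set G1 : twist μ Z ⟶ Y := twistMap μ g ≫ (twistTwistIso μ μ⁻¹ hμν Y).hom with hG1
      set H1 : twist μ Z ⟶ Y := twistMap μ h ≫ (twistTwistIso μ μ⁻¹ hμν Y).hom with hH1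
      have heq : G1 ≫ f = H1 ≫ f := by
        apply Action.Hom.ext
        exact w'
      have hGH : G1 = H1 := mf.right_cancellation G1 H1 heq
      apply Action.Hom.ext
      have h3 := congrArg Action.Hom.hom hGH
      exact h3
    have hf'0 : f' ≠ 0 := by
      intro h0
      apply hf
      apply Action.Hom.ext
      have := congrArg Action.Hom.hom h0
      exact this
    have : IsIso f' := (Simple.mono_isIso_iff_nonzero f').mpr hf'0
    set u := inv f' with hu
    set v : twist μ V ⟶ Y := twistMap μ u ≫ (twistTwistIso μ μ⁻¹ hμν Y).hom with hv
    have h1 : f' ≫ u = 𝟙 _ := IsIso.hom_inv_id f'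
    have h2 : u ≫ f' = 𝟙 _ := IsIso.inv_hom_id f'
    refine ⟨⟨v, ?_, ?_⟩⟩
    · apply Action.Hom.ext
      have h3 := congrArg Action.Hom.hom h1
      exact h3
    · apply Action.Hom.ext
      have h3 := congrArg Action.Hom.hom h2
      exact h3
open scoped Classical in
theorem my_orth {H : Type} [Group H] [Fintype H] (V W : FDRep ℂ H) [Simple V] [Simple W] :
    ∑ g : H, V.character g * W.character g⁻¹ =
      if Nonempty (V ≅ W) then (Fintype.card H : ℂ) else 0 := by
  have hc : (Fintype.card H : ℂ) ≠ 0 := by exact_mod_cast Fintype.card_ne_zero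
  letI : Invertible (Fintype.card H : ℂ) := invertibleOfNonzero hc
  have horth : (⅟(Fintype.card H : ℂ)) • ∑ g : H, V.character g * W.character g⁻¹
      = if Nonempty (V ≅ W) then (1:ℂ) else 0 := by
    have := FDRep.char_orthonormal (k := ℂ) (G := H) V W
    rw [Nat.card_eq_fintype_card] at this
    simpa [invOf_eq_inv, smul_eq_mul] using this
  have h2 := congrArg (fun z => (Fintype.card H : ℂ) • z) horth
  simp only [smul_smul, mul_invOf_self, one_smul] at h2
  rw [h2]
  simp [smul_eq_mul, mul_ite]

theorem pow_mod_cancel {M : Type*} [Monoid M] {u : M} {p : ℕ} (hu : u ^ p = 1) (m : ℕ) :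
    u ^ (m % p) = u ^ m := by
  conv_rhs => rw [← Nat.mod_add_div m p, pow_add, pow_mul, hu, one_pow, mul_one]

end Helpers



/-- The action of permutations of `ι` on `ι`-indexed tuples, permuting the coordinates:
`(π • f) i = f (π⁻¹ i)`. -/
def permAction (ι : Type*) (G : Type*) [Group G] : Equiv.Perm ι →* MulAut (ι → G) where
  toFun π :=
    { toFun := fun f i => f (π⁻¹ i)
      invFun := fun f i => f (π i)
      left_inv := fun f => funext fun i => by simp
      right_inv := fun f => funext fun i => by simp
      map_mul' := fun f g => rfl }
  map_one' := by apply MulEquiv.ext; intro f; funext i; simp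
  map_mul' := fun π₁ π₂ => by apply MulEquiv.ext; intro f; funext i; simp

/-- `C_p = Multiplicative (ZMod p)` acting on `ZMod p` by translations, as permutations. -/
def rotHom (p : ℕ) : Multiplicative (ZMod p) →* Equiv.Perm (ZMod p) where
  toFun z := Equiv.addRight (Multiplicative.toAdd z)
  map_one' := by ext i; simp
  map_mul' := fun z w => by ext i; simp [add_comm, add_assoc, add_left_comm]

/-- The cyclic rotation action of `C_p = Multiplicative (ZMod p)` on `p`-tuples,
`(z • f) i = f (i - z)`. -/
def cyclicRot (p : ℕ) (G : Type*) [Group G] : Multiplicative (ZMod p) →* MulAut (ZMod p → G) :=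
  (permAction (ZMod p) G).comp (rotHom p)
/-- The wreath product `G ≀ C_p = G^{×p} ⋊ C_p`, with `C_p` cyclically permuting
the `p` coordinates of the base group. -/
abbrev Wr (p : ℕ) (G : Type) [Group G] : Type :=
  SemidirectProduct (ZMod p → G) (Multiplicative (ZMod p)) (cyclicRot p G)

def sdEquivProd {N G : Type*} [Group N] [Group G] (φ : G →* MulAut N) :
    SemidirectProduct N G φ ≃ N × G where
  toFun x := (x.left, x.right)
  invFun x := ⟨x.1, x.2⟩
  left_inv x := by cases x; rfl
  right_inv x := rfl

instance {N G : Type*} [Group N] [Group G] {φ : G →* MulAut N} [Fintype N] [Fintype G] :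
    Fintype (SemidirectProduct N G φ) :=
  Fintype.ofEquiv _ (sdEquivProd φ).symm
/-- `χ` is an irreducible (ordinary, complex) character of the group `G`:
it is the character of some simple finite-dimensional complex representation. -/
def IsIrrChar (G : Type) [Group G] (χ : G → ℂ) : Prop :=
  ∃ V : FDRep ℂ G, CategoryTheory.Simple V ∧ ∀ g, V.character g = χ g
/-- The induction to the wreath product `G ≀ C_p` of a class function `χb` on the base
subgroup `G^{×p}`, via the standard induced-character formula. -/
noncomputable def wreathInd (p : ℕ) (G : Type) [Group G] [Fintype G] [NeZero p]
    (χb : (ZMod p → G) → ℂ) : Wr p G → ℂ := fun w =>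
  (Nat.card (ZMod p → G) : ℂ)⁻¹ *
    ∑ x : Wr p G, if (x * w * x⁻¹).right = 1 then χb ((x * w * x⁻¹).left) else 0
/-- A fixed primitive `p`-th root of unity `ω = e^{2πi/p}` in `ℂ`. -/
noncomputable def zeta (p : ℕ) : ℂ := Complex.exp (2 * Real.pi * Complex.I / p)

/-- The linear character `φ_ε` of `C_p`, with `φ_ε(g^j) = ω^{εj}` for the fixed generator `g`. -/
noncomputable def linChar (p : ℕ) (ε : ZMod p) (z : Multiplicative (ZMod p)) : ℂ :=
  zeta p ^ (ε * Multiplicative.toAdd z).val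

theorem zeta_prim (p : ℕ) [NeZero p] : IsPrimitiveRoot (zeta p) p :=
  Complex.isPrimitiveRoot_exp p (NeZero.ne p)

noncomputable def zetaU (p : ℕ) : ℂˣ := Units.mk0 (zeta p) (Complex.exp_ne_zero _)

theorem zetaU_pow (p : ℕ) [NeZero p] : (zetaU p) ^ p = 1 := by
  ext
  simp only [Units.val_pow_eq_pow_val, Units.val_one, zetaU, Units.val_mk0]
  exact (zeta_prim p).pow_eq_one

noncomputable def linCharHom (p : ℕ) [NeZero p] (ε : ZMod p) : Multiplicative (ZMod p) →* ℂˣ where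
  toFun z := zetaU p ^ (ε * Multiplicative.toAdd z).val
  map_one' := by
    simp
  map_mul' a b := by
    show zetaU p ^ (ε * Multiplicative.toAdd (a*b)).val =
      zetaU p ^ (ε * Multiplicative.toAdd a).val * zetaU p ^ (ε * Multiplicative.toAdd b).val
    rw [toAdd_mul, mul_add, ZMod.val_add, pow_mod_cancel (zetaU_pow p), pow_add]

theorem linCharHom_val (p : ℕ) [NeZero p] (ε : ZMod p) (z : Multiplicative (ZMod p)) :
    ((linCharHom p ε z : ℂˣ) : ℂ) = linChar p ε z := by
  simp [linCharHom, zetaU, linChar]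
  rfl

set_option maxHeartbeats 2000000 in
/-- For `φ ∈ Irr(G)`, the induction of `φ^{×p}` from `G^{×p}` to `G ≀ C_p` decomposes as the
sum over `ε ∈ {0,…,p-1}` of the irreducible characters `X(φ; φ_ε)` (the product of an
irreducible extension `χext` of `φ^{×p}` with the inflations of the `p` linear characters
`φ_ε` of `C_p`); in particular the induced character has exactly `p` irreducible constituents,
each with multiplicity one. -/
theorem induced_diagonal_decomposition (p : ℕ) [Fact p.Prime] (G : Type) [Group G] [Fintype G]
    (φ : G → ℂ) (hφ : IsIrrChar G φ)
    (χext : Wr p G → ℂ) (hext : IsIrrChar (Wr p G) χext)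
    (hrestrict : ∀ f : ZMod p → G, χext (SemidirectProduct.inl f) = ∏ i, φ (f i)) :
    (wreathInd p G (fun f => ∏ i, φ (f i)) =
      fun w => ∑ ε : ZMod p, χext w * linChar p ε w.right) ∧
    (∀ ε : ZMod p, IsIrrChar (Wr p G) fun w => χext w * linChar p ε w.right) ∧
    (∀ ε ε' : ZMod p, ε ≠ ε' →
      (fun w : Wr p G => χext w * linChar p ε w.right) ≠
        fun w => χext w * linChar p ε' w.right) := by
  have hp : p.Prime := Fact.out
  haveI : NeZero p := ⟨hp.ne_zero⟩
  obtain ⟨Vφ, hVφS, hVφ⟩ := hφ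
  obtain ⟨Ve, hVeS, hVe⟩ := hext
  haveI := hVφS
  haveI := hVeS
  -- φ is conjugation-invariant
  have hφconj : ∀ a b : G, φ (a * b * a⁻¹) = φ b := by
    intro a b
    rw [← hVφ, ← hVφ, FDRep.char_conj]
  -- the right component of a conjugate
  have hconj_right : ∀ x w : Wr p G, (x * w * x⁻¹).right = w.right := by
    intro x w
    simp only [SemidirectProduct.mul_right, SemidirectProduct.inv_right]
    rw [mul_comm x.right w.right, mul_assoc, mul_inv_cancel, mul_one]
  -- the wreath product μ-twisting characters
  set μ : ZMod p → (Wr p G →* ℂˣ) :=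
    fun ε => (linCharHom p ε).comp (SemidirectProduct.rightHom) with hμdef
  have hμval : ∀ (ε : ZMod p) (w : Wr p G), ((μ ε w : ℂˣ) : ℂ) = linChar p ε w.right := by
    intro ε w
    exact linCharHom_val p ε w.right
  -- cardinalities
  have hcardN : (Nat.card (ZMod p → G) : ℂ) = (Fintype.card (ZMod p → G) : ℂ) := by
    rw [Nat.card_eq_fintype_card]
  have hcardN0 : (Fintype.card (ZMod p → G) : ℂ) ≠ 0 := by
    exact_mod_cast Fintype.card_ne_zero
  have hcardW : Fintype.card (Wr p G) = Fintype.card (ZMod p → G) * p := by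
    rw [Fintype.card_congr (sdEquivProd (cyclicRot p G)), Fintype.card_prod]
    congr 1
    rw [Fintype.card_multiplicative, ZMod.card]
  -- key computation of conjugate values
  have hconj_val : ∀ (f : ZMod p → G) (x : Wr p G),
      (∏ i, φ ((x * SemidirectProduct.inl f * x⁻¹).left i)) = ∏ i, φ (f i) := by
    intro f x
    have hleft : (x * SemidirectProduct.inl f * x⁻¹).left
        = x.left * (cyclicRot p G x.right f) * x.left⁻¹ := by
      simp only [SemidirectProduct.mul_left, SemidirectProduct.left_inl,
        SemidirectProduct.inv_left, SemidirectProduct.mul_right, SemidirectProduct.right_inl,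
        SemidirectProduct.inv_right, mul_one]
      rw [← MulAut.mul_apply, ← map_mul, mul_inv_cancel, map_one, MulAut.one_apply, mul_assoc]
    rw [hleft]
    have h1 : ∀ i, φ ((x.left * (cyclicRot p G x.right f) * x.left⁻¹) i)
        = φ ((cyclicRot p G x.right f) i) := by
      intro i
      exact hφconj (x.left i) _
    calc ∏ i, φ ((x.left * (cyclicRot p G x.right f) * x.left⁻¹) i)
        = ∏ i, φ ((cyclicRot p G x.right f) i) := Finset.prod_congr rfl (fun i _ => h1 i)
      _ = ∏ i, φ (f (((rotHom p x.right)⁻¹ : Equiv.Perm (ZMod p)) i)) := rfl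
      _ = ∏ i, φ (f i) := Equiv.prod_comp _ (fun j => φ (f j))
  -- the sum of all values of a linear character over C_p vanishes for nontrivial ones
  have hlinsum : ∀ z : Multiplicative (ZMod p), z ≠ 1 →
      ∑ ε : ZMod p, linChar p ε z = 0 := by
    intro z hz
    have ht : Multiplicative.toAdd z ≠ 0 := fun h => hz (by
      have := congrArg Multiplicative.ofAdd h
      simpa using this)
    have h1 : ∀ ε : ZMod p, linChar p ε z
        = (fun δ : ZMod p => zeta p ^ δ.val) ((Equiv.mulRight₀ _ ht) ε) := fun ε => rfl
    rw [Finset.sum_congr rfl (fun ε _ => h1 ε), Equiv.sum_comp (Equiv.mulRight₀ _ ht) (fun δ : ZMod p => zeta p ^ δ.val)]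
    -- now ∑ δ : ZMod p, ζ^δ.val = 0
    have hbij : ∑ δ : ZMod p, zeta p ^ δ.val = ∑ k ∈ Finset.range p, zeta p ^ k :=
      Finset.sum_nbij' (i := fun δ : ZMod p => δ.val) (j := fun k : ℕ => (k : ZMod p))
        (fun a _ => Finset.mem_range.2 (ZMod.val_lt a))
        (fun a _ => Finset.mem_univ _)
        (fun a _ => ZMod.natCast_rightInverse a)
        (fun a ha => ZMod.val_natCast_of_lt (Finset.mem_range.1 ha))
        (fun a _ => rfl)
    rw [hbij]
    exact (zeta_prim p).geom_sum_eq_zero hp.one_lt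
  -- linear characters are distinct on nontrivial elements
  have hlinne : ∀ (ε ε' : ZMod p) (z : Multiplicative (ZMod p)), ε ≠ ε' → z ≠ 1 →
      linChar p ε z ≠ linChar p ε' z := by
    intro ε ε' z hne hz h
    have ht : Multiplicative.toAdd z ≠ 0 := fun h' => hz (by
      have := congrArg Multiplicative.ofAdd h'
      simpa using this)
    have h2 := (zeta_prim p).pow_inj (ZMod.val_lt _) (ZMod.val_lt _) h
    have h3 : ε * Multiplicative.toAdd z = ε' * Multiplicative.toAdd z :=
      ZMod.val_injective p h2
    exact hne (mul_right_cancel₀ ht h3)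
  refine ⟨?_, ?_, ?_⟩
  · -- part 1
    funext w
    by_cases hw : w.right = 1
    · -- trivial right component : w = inl f
      obtain ⟨f, z⟩ := w
      have hz : z = 1 := hw
      subst hz
      have hinl : (⟨f, 1⟩ : Wr p G) = SemidirectProduct.inl f := rfl
      rw [hinl]
      have hterm : ∀ x : Wr p G,
          (if (x * SemidirectProduct.inl f * x⁻¹).right = 1 then
            (∏ i, φ ((x * SemidirectProduct.inl f * x⁻¹).left i)) else 0) = ∏ i, φ (f i) := by
        intro x
        rw [if_pos (by rw [hconj_right]; rfl), hconj_val f x]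
      simp only [wreathInd]
      rw [Finset.sum_congr rfl (fun x _ => hterm x), Finset.sum_const, Finset.card_univ, hcardW]
      have hlin1 : ∀ ε : ZMod p, linChar p ε (SemidirectProduct.inl f : Wr p G).right = 1 := by
        intro ε
        show linChar p ε 1 = 1
        simp [linChar]
      rw [Finset.sum_congr rfl (fun ε _ => by rw [hlin1 ε, mul_one]), Finset.sum_const,
        Finset.card_univ, ZMod.card, hrestrict f, hcardN]
      rw [nsmul_eq_mul, nsmul_eq_mul, Nat.cast_mul]
      field_simp [hcardN0]
    · -- nontrivial right component : both sides vanish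
      have hterm : ∀ x : Wr p G,
          (if (x * w * x⁻¹).right = 1 then (∏ i, φ ((x * w * x⁻¹).left i)) else 0) = 0 := by
        intro x
        rw [if_neg (by rw [hconj_right]; exact hw)]
      simp only [wreathInd]
      rw [Finset.sum_congr rfl (fun x _ => hterm x), Finset.sum_const, smul_zero, mul_zero]
      rw [← Finset.mul_sum, hlinsum w.right hw, mul_zero]
  · -- part 2
    intro ε
    refine ⟨twist (μ ε) Ve, twist_simple (μ ε) Ve, ?_⟩
    intro w
    rw [twist_char, hμval, hVe, mul_comm]
  · -- part 3
    intro ε ε' hne heq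
    have hvan : ∀ w : Wr p G, w.right ≠ 1 → χext w = 0 := by
      intro w hw
      have h1 := congrFun heq w
      by_contra h0
      exact hlinne ε ε' w.right hne hw (mul_left_cancel₀ h0 h1)
    have hS1 : ∑ h : Wr p G, Ve.character h * Ve.character h⁻¹
        = (Fintype.card (Wr p G) : ℂ) := by
      rw [my_orth Ve Ve, if_pos ⟨Iso.refl Ve⟩]
    have hS2 : ∑ h : Wr p G, Ve.character h * Ve.character h⁻¹
        = (Fintype.card G : ℂ) ^ p := by
      have hre : ∀ h : Wr p G, Ve.character h * Ve.character h⁻¹ = χext h * χext h⁻¹ := by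
        intro h
        rw [hVe, hVe]
      rw [Finset.sum_congr rfl (fun h _ => hre h)]
      rw [← Equiv.sum_comp (sdEquivProd (cyclicRot p G)).symm (fun h : Wr p G => χext h * χext h⁻¹)]
      rw [Fintype.sum_prod_type]
      have hinner : ∀ f : ZMod p → G,
          (∑ z : Multiplicative (ZMod p),
            χext ((sdEquivProd (cyclicRot p G)).symm (f, z)) *
              χext (((sdEquivProd (cyclicRot p G)).symm (f, z))⁻¹))
          = ∏ i, (φ (f i) * φ ((f i)⁻¹)) := by
        intro f
        rw [Finset.sum_eq_single (1 : Multiplicative (ZMod p))]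
        · have h1 : (sdEquivProd (cyclicRot p G)).symm (f, 1) = SemidirectProduct.inl f := rfl
          rw [h1, ← map_inv (SemidirectProduct.inl (φ := cyclicRot p G)) f, hrestrict,
            hrestrict, ← Finset.prod_mul_distrib]
          rfl
        · intro z _ hz
          have : χext ((sdEquivProd (cyclicRot p G)).symm (f, z)) = 0 := hvan _ hz
          rw [this, zero_mul]
        · intro h
          exact absurd (Finset.mem_univ _) h
      rw [Finset.sum_congr rfl (fun f _ => hinner f)]
      have hcol : ∑ f : ZMod p → G, ∏ i, (φ (f i) * φ ((f i)⁻¹))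
          = ∏ _i : ZMod p, (∑ g : G, φ g * φ g⁻¹) := by
        rw [Fintype.prod_sum (fun (_ : ZMod p) (g : G) => φ g * φ g⁻¹)]
      rw [hcol]
      have hG : (∑ g : G, φ g * φ g⁻¹) = (Fintype.card G : ℂ) := by
        have := my_orth Vφ Vφ
        rw [if_pos ⟨Iso.refl Vφ⟩] at this
        rw [← this]
        exact Finset.sum_congr rfl (fun g _ => by rw [hVφ, hVφ])
      rw [Finset.prod_congr rfl (fun i _ => hG), Finset.prod_const, Finset.card_univ, ZMod.card]
    rw [hS2, hcardW, Nat.cast_mul, Fintype.card_fun, ZMod.card, Nat.cast_pow] at hS1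
    have hGp : ((Fintype.card G : ℂ) ^ p) ≠ 0 := by
      exact pow_ne_zero _ (by exact_mod_cast Fintype.card_ne_zero)
    have hp1 : (1 : ℂ) = (p : ℂ) :=
      mul_left_cancel₀ hGp (by rw [mul_one]; exact hS1)
    have hp1' : p = 1 := by exact_mod_cast hp1.symm
    exact hp.one_lt.ne' hp1'
end

section
/- Let p be a prime, k ≥ 2, and let P = Q ≀ C_p be a Sylow p-subgroup of S_{p^k} with base group B = Q^{×p} (Q a Sylow p-subgroup of S_{p^{k-1}}). Then B is generated by the elements of P having at least one fixed point on {1, ..., p^k}; in particular B is a characteristic subgroup normalized by N_{S_{p^k}}(P). -/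
set_option linter.unusedSectionVars false
set_option maxHeartbeats 1000000

/-- The subgroup of permutations preserving each block (fiber) of `b : α → β`. -/
def blockKernel {α β : Type*} (b : α → β) : Subgroup (Equiv.Perm α) where
  carrier := {g | ∀ x, b (g x) = b x}
  one_mem' := fun _ => rfl
  mul_mem' := fun {g h} hg hh x => (hg (h x)).trans (hh x)
  inv_mem' := fun {g} hg x => by simpa using (hg (g⁻¹ x)).symm

namespace BaseGroupAux
open Equiv


variable {α β : Type*} [DecidableEq β] {b : α → β}

theorem inv_prop (g : blockKernel b) (x : α) : b ((g : Equiv.Perm α)⁻¹ x) = b x := by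
  have := g.2 ((g : Equiv.Perm α)⁻¹ x)
  simpa using this.symm

/-- The component of an element of the block kernel supported on the fiber over `j`. -/
def comp (b : α → β) (j : β) (g : blockKernel b) : Equiv.Perm α where
  toFun x := if b x = j then (g : Equiv.Perm α) x else x
  invFun x := if b x = j then (g : Equiv.Perm α)⁻¹ x else x
  left_inv x := by
    dsimp only
    by_cases h : b x = j
    · rw [if_pos h, if_pos (by rw [g.2 x]; exact h)]; simp
    · rw [if_neg h, if_neg h]
  right_inv x := by
    dsimp only
    by_cases h : b x = j
    · rw [if_pos h, if_pos (by rw [inv_prop g x]; exact h)]; simp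
    · rw [if_neg h, if_neg h]

theorem comp_apply_pos (g : blockKernel b) {j : β} {x : α} (h : b x = j) :
    comp b j g x = (g : Equiv.Perm α) x := if_pos h

theorem comp_apply_neg (g : blockKernel b) {j : β} {x : α} (h : b x ≠ j) :
    comp b j g x = x := if_neg h

theorem comp_self (g : blockKernel b) (x : α) :
    comp b (b x) g x = (g : Equiv.Perm α) x := comp_apply_pos g rfl

theorem comp_mem_blockKernel (g : blockKernel b) (j : β) : comp b j g ∈ blockKernel b := by
  intro x
  by_cases h : b x = j
  · rw [comp_apply_pos g h, g.2]
  · rw [comp_apply_neg g h]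

/-- `comp` as a monoid hom. -/
def compHom (b : α → β) (j : β) : blockKernel b →* Equiv.Perm α where
  toFun := comp b j
  map_one' := by
    ext x
    by_cases h : b x = j
    · rw [comp_apply_pos _ h]; rfl
    · rw [comp_apply_neg _ h]; rfl
  map_mul' g h := by
    ext x
    by_cases hx : b x = j
    · have hhx : b ((h : Equiv.Perm α) x) = j := by rw [h.2 x]; exact hx
      simp only [Equiv.Perm.mul_apply]
      rw [comp_apply_pos _ hx, comp_apply_pos h hx, comp_apply_pos g hhx]
      rfl
    · simp only [Equiv.Perm.mul_apply]
      rw [comp_apply_neg _ hx, comp_apply_neg h hx, comp_apply_neg g hx]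

theorem comp_eq_one_of_forall (g : blockKernel b) (j : β)
    (hg : ∀ x, b x = j → (g : Equiv.Perm α) x = x) : comp b j g = 1 := by
  ext x
  by_cases h : b x = j
  · rw [comp_apply_pos g h]; exact hg x h
  · exact comp_apply_neg g h



theorem sub_one_mul_padic (p : ℕ) (hp : p.Prime) (m : ℕ) :
    (p - 1) * padicValNat p ((p ^ m).factorial) = p ^ m - 1 := by
  haveI : Fact p.Prime := ⟨hp⟩
  induction m with
  | zero => simp
  | succ m ih =>
    have h1 : (p : ℕ) ^ (m + 1) = p * p ^ m := by ring
    rw [h1, padicValNat_factorial_mul, Nat.mul_add, ih, Nat.sub_one_mul]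
    have h2 : 1 ≤ p ^ m := Nat.one_le_pow _ _ hp.pos
    have h3 : p ^ m ≤ p * p ^ m := Nat.le_mul_of_pos_left _ hp.pos
    omega

theorem nu_eq (p k : ℕ) (hp : p.Prime) (hk : 1 ≤ k) :
    ((p ^ k).factorial).factorization p
      = p * ((p ^ (k - 1)).factorial).factorization p + 1 := by
  haveI : Fact p.Prime := ⟨hp⟩
  rw [Nat.factorization_def _ hp, Nat.factorization_def _ hp]
  obtain ⟨m, rfl⟩ : ∃ m, k = m + 1 := ⟨k - 1, by omega⟩
  simp only [Nat.add_sub_cancel]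
  have h1 : (p : ℕ) ^ (m + 1) = p * p ^ m := by ring
  rw [h1, padicValNat_factorial_mul]
  have hb := sub_one_mul_padic p hp m
  rw [Nat.sub_one_mul] at hb
  have h2 : 1 ≤ p ^ m := Nat.one_le_pow _ _ hp.pos
  have h3 : padicValNat p ((p ^ m).factorial) ≤ p * padicValNat p ((p ^ m).factorial) :=
    Nat.le_mul_of_pos_left _ hp.pos
  omega

theorem padic_p_factorial (p : ℕ) (hp : p.Prime) : (p.factorial).factorization p = 1 := by
  haveI : Fact p.Prime := ⟨hp⟩
  rw [Nat.factorization_def _ hp]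
  have := padicValNat_factorial_mul (p := p) 1
  simpa using this

/-- A `p`-element of `Perm (ZMod p)` with a fixed point is the identity. -/
theorem pelement_fixed_eq_one (p : ℕ) (hp : p.Prime) (σ : Equiv.Perm (ZMod p))
    (hord : ∃ m, σ ^ p ^ m = 1) (j0 : ZMod p) (hfix : σ j0 = j0) : σ = 1 := by
  haveI : Fact p.Prime := ⟨hp⟩
  haveI : NeZero p := ⟨hp.pos.ne'⟩
  by_contra h1
  have hct : σ.cycleType ≠ 0 := fun h => h1 (Equiv.Perm.cycleType_eq_zero.mp h)
  obtain ⟨c, hc⟩ := Multiset.exists_mem_of_ne_zero hct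
  obtain ⟨m, hm⟩ := hord
  have hdvd : c ∣ p ^ m := by
    refine dvd_trans ?_ (orderOf_dvd_of_pow_eq_one hm)
    rw [← Equiv.Perm.lcm_cycleType]
    exact Multiset.dvd_lcm hc
  have h2 : 2 ≤ c := Equiv.Perm.two_le_of_mem_cycleType hc
  obtain ⟨i, hi, rfl⟩ := (Nat.dvd_prime_pow hp).mp hdvd
  have hi1 : 1 ≤ i := by
    by_contra h
    have hi0 : i = 0 := by omega
    subst hi0
    simp at h2
  have hpc : p ≤ p ^ i := le_trans (le_of_eq (pow_one p).symm) (Nat.pow_le_pow_right hp.pos hi1)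
  have hsum : p ^ i ≤ σ.cycleType.sum :=
    Multiset.single_le_sum (fun x _ => Nat.zero_le x) _ hc
  rw [Equiv.Perm.sum_cycleType] at hsum
  have hsupp : σ.support ⊆ Finset.univ.erase j0 := by
    intro x hx
    refine Finset.mem_erase.mpr ⟨?_, Finset.mem_univ x⟩
    rintro rfl
    exact (Equiv.Perm.mem_support.mp hx) hfix
  have hcard : σ.support.card ≤ p - 1 := by
    have := Finset.card_le_card hsupp
    rwa [Finset.card_erase_of_mem (Finset.mem_univ _), Finset.card_univ, ZMod.card] at this
  have := hp.two_le
  omega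


section Main
open Equiv


variable {p k : ℕ} (P : Sylow p (Equiv.Perm (Fin (p ^ k)))) (b : Fin (p ^ k) → ZMod p)

theorem exists_section (hp : p.Prime)
    (hcard : ∀ j : ZMod p, Nat.card {x : Fin (p ^ k) // b x = j} = p ^ (k - 1)) :
    ∃ s : ZMod p → Fin (p ^ k), ∀ j, b (s j) = j := by
  have h : ∀ j : ZMod p, Nonempty {x : Fin (p ^ k) // b x = j} := by
    intro j
    have h0 : Nat.card {x : Fin (p ^ k) // b x = j} ≠ 0 := by
      rw [hcard]; exact (Nat.pow_pos hp.pos).ne'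
    exact (Nat.card_ne_zero.mp h0).1
  exact ⟨fun j => (h j).some.1, fun j => (h j).some.2⟩

/-- The action of `P` on the set of blocks, as a permutation of `ZMod p`. -/
noncomputable def phi (hp : p.Prime)
    (hblocks : ∀ g ∈ (P : Subgroup (Equiv.Perm (Fin (p ^ k)))),
      ∀ x y, b x = b y → b (g x) = b (g y))
    (s : ZMod p → Fin (p ^ k)) (hs : ∀ j, b (s j) = j) :
    (P : Subgroup (Equiv.Perm (Fin (p ^ k)))) →* Equiv.Perm (ZMod p) where
  toFun g := Equiv.ofBijective (fun j => b ((g : Equiv.Perm (Fin (p ^ k))) (s j)))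
    (by
      haveI : NeZero p := ⟨hp.pos.ne'⟩
      refine Finite.injective_iff_bijective.mp (by
      intro i j hij
      have h2 := hblocks (g : Equiv.Perm (Fin (p ^ k)))⁻¹ (inv_mem g.2) _ _ hij
      simp only [Equiv.Perm.coe_inv, Equiv.symm_apply_apply] at h2
      rw [hs, hs] at h2
      exact h2))
  map_one' := by
    ext j
    simp [hs j]
  map_mul' g h := by
    ext j
    show b (((g : Equiv.Perm (Fin (p ^ k))) * h) (s j))
      = b ((g : Equiv.Perm (Fin (p ^ k))) (s (b ((h : Equiv.Perm (Fin (p ^ k))) (s j)))))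
    rw [Equiv.Perm.mul_apply]
    exact (hblocks _ g.2 _ _ (hs (b ((h : Equiv.Perm (Fin (p ^ k))) (s j))))).symm

theorem phi_apply (hp : p.Prime) (hblocks) (s) (hs)
    (g : (P : Subgroup (Equiv.Perm (Fin (p ^ k))))) (j : ZMod p) :
    phi P b hp hblocks s hs g j = b ((g : Equiv.Perm (Fin (p ^ k))) (s j)) := by
  simp only [phi, MonoidHom.coe_mk, OneHom.coe_mk, Equiv.ofBijective_apply]

theorem phi_eq_one_iff (hp : p.Prime) (hblocks) (s) (hs)
    (g : (P : Subgroup (Equiv.Perm (Fin (p ^ k))))) :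
    phi P b hp hblocks s hs g = 1 ↔ (g : Equiv.Perm (Fin (p ^ k))) ∈ blockKernel b := by
  constructor
  · intro h x
    have h1 : phi P b hp hblocks s hs g (b x) = b x := by rw [h]; rfl
    rw [phi_apply] at h1
    rw [← hblocks _ g.2 (s (b x)) x (hs (b x))]
    exact h1
  · intro h
    ext j
    rw [phi_apply, Equiv.Perm.one_apply, h (s j), hs]

/-- Any element of `P` with a fixed point lies in the block kernel. -/
theorem fixed_mem_blockKernel (hp : p.Prime)
    (hcard : ∀ j : ZMod p, Nat.card {x : Fin (p ^ k) // b x = j} = p ^ (k - 1))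
    (hblocks : ∀ g ∈ (P : Subgroup (Equiv.Perm (Fin (p ^ k)))),
      ∀ x y, b x = b y → b (g x) = b (g y))
    (g : Equiv.Perm (Fin (p ^ k))) (hg : g ∈ (P : Subgroup (Equiv.Perm (Fin (p ^ k)))))
    (x0 : Fin (p ^ k)) (hx0 : g x0 = x0) : g ∈ blockKernel b := by
  obtain ⟨s, hs⟩ := exists_section b hp hcard
  set φ := phi P b hp hblocks s hs with hφ
  refine (phi_eq_one_iff P b hp hblocks s hs ⟨g, hg⟩).mp ?_
  refine pelement_fixed_eq_one p hp _ ?_ (b x0) ?_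
  · obtain ⟨m, hm⟩ := P.isPGroup' ⟨g, hg⟩
    exact ⟨m, by rw [← map_pow, hm, map_one]⟩
  · rw [phi_apply]
    show b (g (s (b x0))) = b x0
    rw [hblocks _ hg (s (b x0)) x0 (hs (b x0)), hx0]

theorem card_B_lower (hp : p.Prime) (hk : 1 ≤ k)
    (hcard : ∀ j : ZMod p, Nat.card {x : Fin (p ^ k) // b x = j} = p ^ (k - 1))
    (hblocks : ∀ g ∈ (P : Subgroup (Equiv.Perm (Fin (p ^ k)))),
      ∀ x y, b x = b y → b (g x) = b (g y)) :
    p ^ (((p ^ k).factorial).factorization p - 1)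
      ≤ Nat.card ↥((P : Subgroup (Equiv.Perm (Fin (p ^ k)))) ⊓ blockKernel b) := by
  haveI : Fact p.Prime := ⟨hp⟩
  obtain ⟨s, hs⟩ := exists_section b hp hcard
  set φ := phi P b hp hblocks s hs with hφ
  set N := ((p ^ k).factorial).factorization p with hN
  have hcardP : Nat.card ↥(P : Subgroup (Equiv.Perm (Fin (p ^ k)))) = p ^ N := by
    have h1 := Sylow.card_eq_multiplicity P
    have h2 : Nat.card (Equiv.Perm (Fin (p ^ k))) = (p ^ k).factorial := by
      rw [Nat.card_eq_fintype_card, Fintype.card_perm, Fintype.card_fin]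
    rwa [h2] at h1
  -- the range of φ has order dividing p
  have hrange : Nat.card ↥φ.range ∣ p := by
    have hpg : IsPGroup p ↥φ.range :=
      IsPGroup.of_surjective P.isPGroup' φ.rangeRestrict φ.rangeRestrict_surjective
    obtain ⟨a, ha⟩ := IsPGroup.iff_card.mp hpg
    have hdvd : Nat.card ↥φ.range ∣ Nat.card (Equiv.Perm (ZMod p)) :=
      Subgroup.card_subgroup_dvd_card _
    have hpf : Nat.card (Equiv.Perm (ZMod p)) = p.factorial := by
      haveI : NeZero p := ⟨hp.pos.ne'⟩
      rw [Nat.card_eq_fintype_card, Fintype.card_perm, ZMod.card]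
    rw [hpf, ha] at hdvd
    have ha1 : a ≤ 1 := by
      have h3 := (hp.pow_dvd_iff_le_factorization (Nat.factorial_ne_zero p)).mp hdvd
      rwa [padic_p_factorial p hp] at h3
    rw [ha]
    calc p ^ a ∣ p ^ 1 := pow_dvd_pow p ha1
      _ = p := pow_one p
  have hkerB : Nat.card ↥φ.ker
      = Nat.card ↥((P : Subgroup (Equiv.Perm (Fin (p ^ k)))) ⊓ blockKernel b) := by
    refine Nat.card_congr ⟨fun g => ⟨g.1.1, g.1.2,
        (phi_eq_one_iff P b hp hblocks s hs g.1).mp g.2⟩,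
      fun g => ⟨⟨g.1, g.2.1⟩, (phi_eq_one_iff P b hp hblocks s hs ⟨g.1, g.2.1⟩).mpr g.2.2⟩,
      fun g => rfl, fun g => rfl⟩
  have hsplit := Subgroup.card_eq_card_quotient_mul_card_subgroup φ.ker
  have hquot : Nat.card (↥(P : Subgroup (Equiv.Perm (Fin (p ^ k)))) ⧸ φ.ker)
      = Nat.card ↥φ.range :=
    Nat.card_congr (QuotientGroup.quotientKerEquivRange φ).toEquiv
  rw [hcardP, hquot, hkerB] at hsplit
  -- p ^ N = q * cB with q ∣ p
  have hq := Nat.le_of_dvd hp.pos hrange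
  have hN1 : 1 ≤ N := by
    rw [hN, nu_eq p k hp hk]; omega
  have hpow : p ^ N = p * p ^ (N - 1) := by
    rw [← pow_succ']
    congr 1
    omega
  refine Nat.le_of_mul_le_mul_left ?_ hp.pos
  calc p * p ^ (N - 1) = p ^ N := hpow.symm
    _ = _ * _ := hsplit
    _ ≤ p * _ := Nat.mul_le_mul_right _ hq


/-- The subgroup of permutations fixing every point outside the fiber over `j`. -/
def fixSubgroup {n : ℕ} (b : Fin n → ZMod p) (j : ZMod p) : Subgroup (Equiv.Perm (Fin n)) where
  carrier := {g | ∀ x, ¬(b x = j) → g x = x}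
  one_mem' := fun x _ => rfl
  mul_mem' := fun {g h} hg hh x hx => by
    simp only [Equiv.Perm.mul_apply, hh x hx, hg x hx]
  inv_mem' := fun {g} hg x hx => by
    rw [Equiv.Perm.inv_eq_iff_eq]
    exact (hg x hx).symm

theorem card_fixSubgroup (hp : p.Prime)
    (hcard : ∀ j : ZMod p, Nat.card {x : Fin (p ^ k) // b x = j} = p ^ (k - 1))
    (j : ZMod p) :
    Nat.card ↥(fixSubgroup b j) = (p ^ (k - 1)).factorial := by
  have e1 : ↥(fixSubgroup b j) ≃ {f : Equiv.Perm (Fin (p ^ k)) // ∀ a, ¬(b a = j) → f a = a} :=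
    Equiv.subtypeEquivRight (fun g => Iff.rfl)
  have e2 : {f : Equiv.Perm (Fin (p ^ k)) // ∀ a, ¬(b a = j) → f a = a}
      ≃ Equiv.Perm {a : Fin (p ^ k) // b a = j} :=
    (Equiv.Perm.subtypeEquivSubtypePerm (fun a => b a = j)).symm
  rw [Nat.card_congr (e1.trans e2), Nat.card_eq_fintype_card, Fintype.card_perm,
    ← Nat.card_eq_fintype_card, hcard j]

/-- Key lemma: each component of an element of the base group `B = P ⊓ blockKernel b`
lies again in `P`. -/
theorem comp_mem_sylow (hp : p.Prime) (hk : 1 ≤ k)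
    (hcard : ∀ j : ZMod p, Nat.card {x : Fin (p ^ k) // b x = j} = p ^ (k - 1))
    (hblocks : ∀ g ∈ (P : Subgroup (Equiv.Perm (Fin (p ^ k)))),
      ∀ x y, b x = b y → b (g x) = b (g y)) :
    ∀ g : blockKernel b, (g : Equiv.Perm (Fin (p ^ k))) ∈ (P : Subgroup (Equiv.Perm (Fin (p ^ k)))) →
      ∀ j : ZMod p, comp b j g ∈ (P : Subgroup (Equiv.Perm (Fin (p ^ k)))) := by
  haveI : Fact p.Prime := ⟨hp⟩
  haveI : NeZero p := ⟨hp.pos.ne'⟩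
  set BK : Subgroup ↥(blockKernel b) :=
    Subgroup.comap (blockKernel b).subtype (P : Subgroup (Equiv.Perm (Fin (p ^ k)))) with hBKdef
  set H : ZMod p → Subgroup (Equiv.Perm (Fin (p ^ k))) :=
    fun j => Subgroup.map (compHom b j) BK with hHdef
  have hBKpg : IsPGroup p ↥BK :=
    IsPGroup.comap_of_injective P.isPGroup' (blockKernel b).subtype Subtype.coe_injective
  have hHpg : ∀ j, IsPGroup p ↥(H j) := fun j => hBKpg.map _
  set M : ℕ := ((p ^ (k - 1)).factorial).factorization p with hM
  set N : ℕ := ((p ^ k).factorial).factorization p with hN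
  have hNM : N = p * M + 1 := nu_eq p k hp hk
  -- each H j has order dividing p ^ M
  have hHcard : ∀ j, Nat.card ↥(H j) ∣ p ^ M := by
    intro j
    obtain ⟨a, ha⟩ := IsPGroup.iff_card.mp (hHpg j)
    have hle : H j ≤ fixSubgroup b j := by
      rintro x ⟨g, hg, rfl⟩
      intro y hy
      exact comp_apply_neg g hy
    have hdvd : Nat.card ↥(H j) ∣ (p ^ (k - 1)).factorial :=
      (card_fixSubgroup b hp hcard j) ▸ Subgroup.card_dvd_of_le hle
    rw [ha] at hdvd ⊢
    exact pow_dvd_pow p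
      ((hp.pow_dvd_iff_le_factorization (Nat.factorial_ne_zero _)).mp hdvd)
  -- the embedding of BK into the product of the H j
  set Psi : ↥BK →* ((j : ZMod p) → ↥(H j)) :=
    { toFun := fun g j => ⟨compHom b j g.1, ⟨g.1, g.2, rfl⟩⟩
      map_one' := by
        funext j
        exact Subtype.ext (by simp)
      map_mul' := fun g h => by
        funext j
        exact Subtype.ext (by simp) } with hPsidef
  have hPsi_inj : Function.Injective Psi := by
    intro g g' hgg
    have h1 : ∀ j, compHom b j g.1 = compHom b j g'.1 :=
      fun j => congrArg Subtype.val (congrFun hgg j)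
    refine Subtype.ext (Subtype.ext (Equiv.ext fun x => ?_))
    have h2 := congrFun (congrArg (fun (e : Equiv.Perm (Fin (p ^ k))) => (e : Fin (p ^ k) → Fin (p ^ k))) (h1 (b x))) x
    simpa only [compHom, MonoidHom.coe_mk, OneHom.coe_mk, comp_self] using h2
  -- cardinality bookkeeping
  have hBKcard : Nat.card ↥BK
      = Nat.card ↥((P : Subgroup (Equiv.Perm (Fin (p ^ k)))) ⊓ blockKernel b) :=
    Nat.card_congr ⟨fun g => ⟨g.1.1, g.2, g.1.2⟩, fun g => ⟨⟨g.1, g.2.2⟩, g.2.1⟩,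
      fun g => rfl, fun g => rfl⟩
  have hlow : p ^ (N - 1) ≤ Nat.card ↥BK := by
    rw [hBKcard]
    exact card_B_lower P b hp hk hcard hblocks
  have hprodle : Nat.card ((j : ZMod p) → ↥(H j)) ≤ p ^ (N - 1) := by
    rw [Nat.card_pi]
    calc ∏ j : ZMod p, Nat.card ↥(H j)
        ≤ ∏ _j : ZMod p, p ^ M := by
          refine Finset.prod_le_prod (fun _ _ => Nat.zero_le _) (fun j _ => ?_)
          exact Nat.le_of_dvd (Nat.pow_pos hp.pos) (hHcard j)
      _ = (p ^ M) ^ Fintype.card (ZMod p) := by rw [Finset.prod_const, Finset.card_univ]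
      _ = p ^ (N - 1) := by
          rw [ZMod.card, ← pow_mul, hNM, Nat.add_sub_cancel, Nat.mul_comm]
  have hup : Nat.card ↥BK ≤ Nat.card ((j : ZMod p) → ↥(H j)) :=
    Nat.card_le_card_of_injective Psi hPsi_inj
  have hcards : Nat.card ↥BK = Nat.card ((j : ZMod p) → ↥(H j)) :=
    le_antisymm hup (le_trans hprodle (le_trans hlow (le_refl _)))
  -- hence Psi is surjective
  haveI : Fintype ↥BK := Fintype.ofFinite _
  haveI : Fintype ((j : ZMod p) → ↥(H j)) := Fintype.ofFinite _
  have hPsi_surj : Function.Surjective Psi := by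
    have hb := (Fintype.bijective_iff_injective_and_card Psi).mpr
      ⟨hPsi_inj, by rw [← Nat.card_eq_fintype_card, ← Nat.card_eq_fintype_card, hcards]⟩
    exact hb.2
  -- conclude
  intro g hg j
  have hgBK : g ∈ BK := hg
  obtain ⟨g', hg'⟩ := hPsi_surj (Pi.mulSingle j ⟨compHom b j g, ⟨g, hgBK, rfl⟩⟩)
  have hj : compHom b j g'.1 = compHom b j g := by
    have h1 := congrFun hg' j
    rw [Pi.mulSingle_eq_same] at h1
    exact congrArg Subtype.val h1
  have hne : ∀ i, i ≠ j → compHom b i g'.1 = 1 := by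
    intro i hi
    have h1 := congrFun hg' i
    rw [Pi.mulSingle_eq_of_ne hi] at h1
    exact congrArg Subtype.val h1
  have hkey : (g'.1 : Equiv.Perm (Fin (p ^ k))) = comp b j g := by
    refine Equiv.ext fun x => ?_
    by_cases hx : b x = j
    · calc (g'.1 : Equiv.Perm (Fin (p ^ k))) x = comp b (b x) g'.1 x := (comp_self g'.1 x).symm
        _ = comp b j g'.1 x := by rw [hx]
        _ = comp b j g x := by
            have : comp b j g'.1 = comp b j g := hj
            rw [this]
    · calc (g'.1 : Equiv.Perm (Fin (p ^ k))) x = comp b (b x) g'.1 x := (comp_self g'.1 x).symm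
        _ = (1 : Equiv.Perm (Fin (p ^ k))) x := by
            have : comp b (b x) g'.1 = 1 := hne (b x) hx
            rw [this]
        _ = x := rfl
        _ = comp b j g x := (comp_apply_neg g hx).symm
  have hg'P : (g'.1 : Equiv.Perm (Fin (p ^ k))) ∈ (P : Subgroup (Equiv.Perm (Fin (p ^ k)))) := g'.2
  rwa [hkey] at hg'P


theorem mem_closure_of_base (hp : p.Prime) (hk : 1 ≤ k)
    (hcard : ∀ j : ZMod p, Nat.card {x : Fin (p ^ k) // b x = j} = p ^ (k - 1))
    (hblocks : ∀ g ∈ (P : Subgroup (Equiv.Perm (Fin (p ^ k)))),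
      ∀ x y, b x = b y → b (g x) = b (g y)) :
    ∀ g ∈ (P : Subgroup (Equiv.Perm (Fin (p ^ k)))) ⊓ blockKernel b,
      g ∈ Subgroup.closure {g : Equiv.Perm (Fin (p ^ k)) | g ∈ P ∧ ∃ x, g x = x} := by
  haveI : Fact p.Prime := ⟨hp⟩
  obtain ⟨s, hs⟩ := exists_section b hp hcard
  set S := {g : Equiv.Perm (Fin (p ^ k)) | g ∈ P ∧ ∃ x, g x = x} with hS
  suffices h : ∀ (t : Finset (ZMod p)) (g : Equiv.Perm (Fin (p ^ k))),
      g ∈ (P : Subgroup (Equiv.Perm (Fin (p ^ k)))) ⊓ blockKernel b →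
      (∀ x, b x ∉ t → g x = x) → g ∈ Subgroup.closure S by
    exact fun g hg => h Finset.univ g hg (fun x hx => absurd (Finset.mem_univ _) hx)
  intro t
  induction t using Finset.induction_on with
  | empty =>
    intro g hg hsupp
    have hone : g = 1 := Equiv.ext fun x => hsupp x (Finset.notMem_empty _)
    rw [hone]
    exact one_mem _
  | @insert j t hjt ih =>
    intro g hg hsupp
    set gk : blockKernel b := ⟨g, hg.2⟩ with hgk
    have hcompP : comp b j gk ∈ (P : Subgroup (Equiv.Perm (Fin (p ^ k)))) :=
      comp_mem_sylow P b hp hk hcard hblocks gk hg.1 j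
    have hne : b (s (j + 1)) ≠ j := by
      rw [hs]
      intro h
      exact one_ne_zero (add_eq_left.mp h)
    have hfix : comp b j gk (s (j + 1)) = s (j + 1) := comp_apply_neg gk hne
    have hSmem : comp b j gk ∈ S := ⟨hcompP, ⟨s (j + 1), hfix⟩⟩
    have hcompB : comp b j gk ∈ (P : Subgroup (Equiv.Perm (Fin (p ^ k)))) ⊓ blockKernel b :=
      ⟨hcompP, comp_mem_blockKernel gk j⟩
    have hrest : (comp b j gk)⁻¹ * g ∈ (P : Subgroup (Equiv.Perm (Fin (p ^ k)))) ⊓ blockKernel b :=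
      mul_mem (inv_mem hcompB) hg
    have hsupp' : ∀ x, b x ∉ t → ((comp b j gk)⁻¹ * g) x = x := by
      intro x hx
      by_cases hbx : b x = j
      · show (comp b j gk)⁻¹ (g x) = x
        have h1 : g x = comp b j gk x := (comp_apply_pos gk hbx).symm
        rw [h1, Equiv.Perm.coe_inv, Equiv.symm_apply_apply]
      · have hxi : b x ∉ insert j t := by
          rw [Finset.mem_insert]
          push_neg
          exact ⟨hbx, hx⟩
        have hgx : g x = x := hsupp x hxi
        show (comp b j gk)⁻¹ (g x) = x
        rw [hgx, Equiv.Perm.inv_eq_iff_eq]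
        exact (comp_apply_neg gk hbx).symm
    have hmem := ih ((comp b j gk)⁻¹ * g) hrest hsupp'
    have hdec : g = comp b j gk * ((comp b j gk)⁻¹ * g) := by group
    rw [hdec]
    exact mul_mem (Subgroup.subset_closure hSmem) hmem

end Main

end BaseGroupAux

/-- Let `P` be a Sylow `p`-subgroup of `S_{p^k}` (`k ≥ 2`) acting imprimitively with `p` blocks
of size `p^{k-1}` (given by the fibers of `b`). Then the base group
`B = P ∩ (block kernel)` is generated by the elements of `P` having at least one fixed point;
in particular `B` is normalized by `N_{S_{p^k}}(P)`. -/
theorem base_group_generated_by_fixed_point_elements (p k : ℕ) (hp : p.Prime) (hk : 2 ≤ k)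
    (P : Sylow p (Equiv.Perm (Fin (p ^ k)))) (b : Fin (p ^ k) → ZMod p)
    (hcard : ∀ j : ZMod p, Nat.card {x : Fin (p ^ k) // b x = j} = p ^ (k - 1))
    (hblocks : ∀ g ∈ (P : Subgroup (Equiv.Perm (Fin (p ^ k)))),
      ∀ x y, b x = b y → b (g x) = b (g y)) :
    Subgroup.closure {g : Equiv.Perm (Fin (p ^ k)) | g ∈ P ∧ ∃ x, g x = x} =
      (P : Subgroup (Equiv.Perm (Fin (p ^ k)))) ⊓ blockKernel b ∧
    ∀ x ∈ Subgroup.normalizer (P : Subgroup (Equiv.Perm (Fin (p ^ k)))),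
      ∀ g ∈ (P : Subgroup (Equiv.Perm (Fin (p ^ k)))) ⊓ blockKernel b,
        x * g * x⁻¹ ∈ (P : Subgroup (Equiv.Perm (Fin (p ^ k)))) ⊓ blockKernel b := by
  have hk1 : 1 ≤ k := le_trans (by norm_num) hk
  have h1 : Subgroup.closure {g : Equiv.Perm (Fin (p ^ k)) | g ∈ P ∧ ∃ x, g x = x} =
      (P : Subgroup (Equiv.Perm (Fin (p ^ k)))) ⊓ blockKernel b := by
    apply le_antisymm
    · rw [Subgroup.closure_le]
      rintro g ⟨hgP, x, hx⟩
      exact ⟨hgP, BaseGroupAux.fixed_mem_blockKernel P b hp hcard hblocks g hgP x hx⟩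
    · intro g hg
      exact BaseGroupAux.mem_closure_of_base P b hp hk1 hcard hblocks g hg
  refine ⟨h1, ?_⟩
  intro x hx g hg
  rw [← h1] at hg ⊢
  refine Subgroup.closure_induction ?_ ?_ ?_ ?_ hg
  · rintro y ⟨hyP, x0, hx0⟩
    refine Subgroup.subset_closure ⟨(Subgroup.mem_normalizer_iff.mp hx y).mp hyP, ⟨x x0, ?_⟩⟩
    simp only [Equiv.Perm.mul_apply, Equiv.Perm.coe_inv, Equiv.symm_apply_apply]
    rw [hx0]
  · have : x * 1 * x⁻¹ = 1 := by group
    rw [this]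
    exact one_mem _
  · intro a c _ _ ha hc
    have : x * (a * c) * x⁻¹ = (x * a * x⁻¹) * (x * c * x⁻¹) := by group
    rw [this]
    exact mul_mem ha hc
  · intro a _ ha
    have : x * a⁻¹ * x⁻¹ = (x * a * x⁻¹)⁻¹ := by group
    rw [this]
    exact inv_mem ha
end

section
/- Let p be a prime and k ≥ 1. The set of linear characters of a Sylow p-subgroup P of S_{p^k} has cardinality p^k; equivalently, the abelianization of the k-fold iterated wreath product C_p ≀ ... ≀ C_p is isomorphic to (C_p)^{×k}. -/
/-- Auxiliary construction of the `k`-fold iterated wreath product `C_p ≀ ⋯ ≀ C_p`,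
bundled with its group structure. -/
def IWaux (p : ℕ) : ℕ → Σ G : Type, Group G
  | 0 => ⟨PUnit, inferInstance⟩
  | (k + 1) =>
      letI := (IWaux p k).2
      ⟨SemidirectProduct (ZMod p → (IWaux p k).1) (Multiplicative (ZMod p))
        (cyclicRot p (IWaux p k).1), inferInstance⟩

/-- The `k`-fold iterated wreath product `C_p ≀ ⋯ ≀ C_p` (isomorphic to a Sylow `p`-subgroup
of `S_{p^k}`). -/
def IW (p k : ℕ) : Type := (IWaux p k).1

instance (p k : ℕ) : Group (IW p k) := (IWaux p k).2

-- ===================== auxiliary development =====================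

open SemidirectProduct Finset

lemma hom_pi_eq_prod {I : Type*} [DecidableEq I] [Fintype I] {Z : I → Type*}
    [∀ i, Monoid (Z i)] {M : Type*} [CommMonoid M] (u : (∀ i, Z i) →* M) (f : ∀ i, Z i) :
    u f = ∏ i, u (Pi.mulSingle i (f i)) := by
  have key : ∀ S : Finset I, u (fun i => if i ∈ S then f i else 1)
      = ∏ i ∈ S, u (Pi.mulSingle i (f i)) := by
    intro S
    induction S using Finset.induction_on with
    | empty =>
      simp only [Finset.notMem_empty, if_false, Finset.prod_empty]
      exact map_one u
    | @insert a S ha ih =>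
      have hfun : (fun i => if i ∈ insert a S then f i else 1)
          = Pi.mulSingle a (f a) * (fun i => if i ∈ S then f i else 1) := by
        funext j
        by_cases hj : j = a
        · subst hj
          simp [ha]
        · have : Pi.mulSingle a (f a) j = 1 := Pi.mulSingle_eq_of_ne hj _
          simp [Finset.mem_insert, hj, this]
      rw [hfun, map_mul, ih, Finset.prod_insert ha]
  have h := key Finset.univ
  simpa using h

lemma ab_of_conj {G : Type*} [Group G] (a b : G) :
    Abelianization.of (a * b * a⁻¹) = Abelianization.of b := by
  rw [map_mul, map_mul, map_inv, mul_comm (Abelianization.of a), mul_assoc,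
    mul_inv_cancel, mul_one]

lemma conj_comm_eq {A : Type*} [CommGroup A] (a : A) :
    (MulAut.conj a).toMonoidHom = MonoidHom.id A := by
  ext x
  simp [MulAut.conj_apply, mul_comm]

section SD

variable (p : ℕ) [NeZero p] (W : Type*) [Group W]

local notation "Cp" => Multiplicative (ZMod p)
local notation "SDp" => (ZMod p → W) ⋊[cyclicRot p W] Multiplicative (ZMod p)

lemma cyclicRot_apply (z : Multiplicative (ZMod p)) (f : ZMod p → W) (i : ZMod p) :
    cyclicRot p W z f i = f (i - z.toAdd) := by
  show f ((Equiv.addRight z.toAdd)⁻¹ i) = _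
  simp [Equiv.Perm.inv_def, sub_eq_add_neg]

/-- the product-of-coordinates hom into the abelianization. -/
def sumHom : (ZMod p → W) →* Abelianization W where
  toFun f := ∏ i, Abelianization.of (f i)
  map_one' := by simp
  map_mul' f g := by
    simp [map_mul, Finset.prod_mul_distrib]

lemma sdCompat : ∀ z : Cp,
    ((sumHom p W).prod 1).comp ((cyclicRot p W) z).toMonoidHom
      = (MulAut.conj ((MonoidHom.inr (Abelianization W) Cp) z)).toMonoidHom.comp
          ((sumHom p W).prod 1) := by
  intro z
  rw [conj_comm_eq]
  refine MonoidHom.ext fun f => ?_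
  refine Prod.ext ?_ rfl
  show ∏ i, Abelianization.of (cyclicRot p W z f i) = ∏ i, Abelianization.of (f i)
  refine Fintype.prod_equiv (Equiv.subRight z.toAdd) _ _ fun i => ?_
  rw [cyclicRot_apply]
  rfl

/-- the hom from the semidirect product to `Ab W × C_p`. -/
def toProd : SDp →* Abelianization W × Cp :=
  SemidirectProduct.lift ((sumHom p W).prod 1) (MonoidHom.inr _ _) (sdCompat p W)

/-- the hom back. -/
noncomputable def fromProd : Abelianization W × Cp →* Abelianization SDp :=
  (Abelianization.lift ((Abelianization.of).comp
      ((SemidirectProduct.inl).comp (MonoidHom.mulSingle (fun _ : ZMod p => W) 0)))).coprod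
    ((Abelianization.of).comp SemidirectProduct.inr)

lemma key_single (i : ZMod p) (x : W) :
    (Abelianization.of (SemidirectProduct.inl (Pi.mulSingle i x) : SDp))
      = Abelianization.of (SemidirectProduct.inl (Pi.mulSingle 0 x) : SDp) := by
  have h : (cyclicRot p W (Multiplicative.ofAdd i)) (Pi.mulSingle 0 x) = Pi.mulSingle i x := by
    funext j
    rw [cyclicRot_apply]
    rw [toAdd_ofAdd]
    by_cases hj : j = i
    · subst hj; rw [sub_self, Pi.mulSingle_eq_same, Pi.mulSingle_eq_same]
    · rw [Pi.mulSingle_eq_of_ne hj, Pi.mulSingle_eq_of_ne (sub_ne_zero.mpr hj)]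
  rw [← h, SemidirectProduct.inl_aut, map_inv, ab_of_conj]

lemma toProd_inl_single (i : ZMod p) (x : W) :
    toProd p W (SemidirectProduct.inl (Pi.mulSingle i x)) = (Abelianization.of x, 1) := by
  rw [toProd, SemidirectProduct.lift_inl]
  refine Prod.ext ?_ rfl
  show ∏ j, Abelianization.of (Pi.mulSingle i x j) = Abelianization.of x
  rw [Fintype.prod_eq_single i (fun j hj => by rw [Pi.mulSingle_eq_of_ne hj, map_one])]
  simp

lemma toProd_inl (f : ZMod p → W) :
    toProd p W (SemidirectProduct.inl f) = (∏ i, Abelianization.of (f i), 1) := by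
  rw [toProd, SemidirectProduct.lift_inl]
  rfl

lemma fromProd_of (x : W) :
    fromProd p W (Abelianization.of x, 1)
      = Abelianization.of (SemidirectProduct.inl (Pi.mulSingle 0 x) : SDp) := by
  rw [fromProd, MonoidHom.coprod_apply]
  simp

lemma fromProd_inr (z : Cp) :
    fromProd p W (1, z) = Abelianization.of (SemidirectProduct.inr z : SDp) := by
  rw [fromProd, MonoidHom.coprod_apply]
  simp

noncomputable def sdAbEquiv : Abelianization SDp ≃* Abelianization W × Cp := by
  refine MonoidHom.toMulEquiv (Abelianization.lift (toProd p W)) (fromProd p W) ?_ ?_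
  · refine Abelianization.hom_ext _ _ ?_
    refine SemidirectProduct.hom_ext ?_ ?_
    · refine MonoidHom.ext fun f => ?_
      simp only [MonoidHom.comp_apply, MonoidHom.id_apply, Abelianization.lift_apply_of]
      have step1 : fromProd p W (toProd p W (SemidirectProduct.inl f))
          = ∏ i, fromProd p W (Abelianization.of (f i), 1) := by
        rw [toProd_inl]
        have : ((∏ i, Abelianization.of (f i), 1) : Abelianization W × Multiplicative (ZMod p))
            = (MonoidHom.inl (Abelianization W) (Multiplicative (ZMod p)))
                (∏ i, Abelianization.of (f i)) := rfl
        rw [this, ← MonoidHom.comp_apply, map_prod]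
        rfl
      rw [step1]
      have step2 : ∀ i : ZMod p, fromProd p W (Abelianization.of (f i), 1)
          = Abelianization.of (SemidirectProduct.inl (Pi.mulSingle i (f i))
              : (ZMod p → W) ⋊[cyclicRot p W] Multiplicative (ZMod p)) := by
        intro i
        rw [fromProd_of]
        exact (key_single p W i (f i)).symm
      rw [Finset.prod_congr rfl fun i _ => step2 i]
      exact (hom_pi_eq_prod ((Abelianization.of).comp
        (SemidirectProduct.inl (φ := cyclicRot p W))) f).symm
    · refine MonoidHom.ext fun z => ?_
      simp only [MonoidHom.comp_apply, MonoidHom.id_apply, Abelianization.lift_apply_of]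
      have : toProd p W (SemidirectProduct.inr z) = (1, z) := by
        rw [toProd, SemidirectProduct.lift_inr]; rfl
      rw [this, fromProd_inr]
  · have hl : ∀ a : Abelianization W,
        Abelianization.lift (toProd p W) (fromProd p W (a, 1)) = (a, 1) := by
      have : ((Abelianization.lift (toProd p W)).comp (fromProd p W)).comp
          (MonoidHom.inl (Abelianization W) Cp) = MonoidHom.inl _ _ := by
        refine Abelianization.hom_ext _ _ ?_
        refine MonoidHom.ext fun x => ?_
        simp only [MonoidHom.comp_apply, MonoidHom.inl_apply]
        rw [fromProd_of, Abelianization.lift_apply_of, toProd_inl_single]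
      intro a
      have h := DFunLike.congr_fun this a
      simpa only [MonoidHom.comp_apply, MonoidHom.inl_apply] using h
    have hr : ∀ z : Cp,
        Abelianization.lift (toProd p W) (fromProd p W (1, z)) = (1, z) := by
      intro z
      rw [fromProd_inr, Abelianization.lift_apply_of]
      rw [toProd, SemidirectProduct.lift_inr]; rfl
    refine MonoidHom.ext fun a => ?_
    obtain ⟨a, z⟩ := a
    have hdec : ((a, z) : Abelianization W × Cp) = (a, (1:Cp)) * ((1:Abelianization W), z) := by
      simp
    rw [MonoidHom.comp_apply, MonoidHom.id_apply, hdec, map_mul, map_mul, hl, hr]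

end SD

-- ===================== abelianization of IW =====================

section IWab

variable (p : ℕ) [NeZero p]

noncomputable def abStep (k : ℕ) :
    Abelianization (IW p (k+1)) ≃* Abelianization (IW p k) × Multiplicative (ZMod p) :=
  sdAbEquiv p (IW p k)

def piSuccEquiv (k : ℕ) (C : Type*) [Group C] :
    (C × (Fin k → C)) ≃* (Fin (k+1) → C) where
  toEquiv := Fin.consEquiv (fun _ : Fin (k+1) => C)
  map_mul' x y := by
    funext i
    cases i using Fin.cases <;> simp [Fin.consEquiv]

noncomputable def abIW : ∀ k, Abelianization (IW p k) ≃* (Fin k → Multiplicative (ZMod p))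
  | 0 => by
    haveI : Subsingleton (IW p 0) := inferInstanceAs (Subsingleton PUnit)
    haveI : Subsingleton (Abelianization (IW p 0)) := by
      constructor
      refine Quotient.ind fun a => Quotient.ind fun b => ?_
      exact congrArg _ (Subsingleton.elim a b)
    haveI : Unique (Abelianization (IW p 0)) := uniqueOfSubsingleton 1
    exact MulEquiv.ofUnique
  | (k+1) =>
    (abStep p k).trans ((MulEquiv.prodCongr (abIW k) (MulEquiv.refl _)).trans
      (MulEquiv.prodComm.trans (piSuccEquiv k _)))

end IWab

-- ===================== embedding into permutation groups =====================

section Perm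

variable (p : ℕ) [NeZero p] (W : Type*) [Group W] (X : Type*)

def permOfTuple (e : W →* Equiv.Perm X) : (ZMod p → W) →* Equiv.Perm (ZMod p × X) where
  toFun f := Equiv.prodShear (Equiv.refl _) (fun i => e (f i))
  map_one' := by
    refine Equiv.ext fun x => ?_
    simp [Equiv.prodShear]
  map_mul' f g := by
    refine Equiv.ext fun x => ?_
    simp [Equiv.prodShear, Equiv.Perm.mul_apply]

def permOfRot : Multiplicative (ZMod p) →* Equiv.Perm (ZMod p × X) where
  toFun z := Equiv.prodCongr (Equiv.addRight z.toAdd) (Equiv.refl X)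
  map_one' := by
    refine Equiv.ext fun x => ?_
    simp
  map_mul' z w := by
    refine Equiv.ext fun x => ?_
    obtain ⟨i, y⟩ := x
    simp [Equiv.Perm.mul_apply, Prod.map, add_comm, add_assoc, add_left_comm]

lemma permCompat (e : W →* Equiv.Perm X) : ∀ z,
    (permOfTuple p W X e).comp ((cyclicRot p W) z).toMonoidHom
      = (MulAut.conj (permOfRot p X z)).toMonoidHom.comp (permOfTuple p W X e) := by
  intro z
  refine MonoidHom.ext fun f => ?_
  have key : permOfTuple p W X e (cyclicRot p W z f) * permOfRot p X z
      = permOfRot p X z * permOfTuple p W X e f := by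
    refine Equiv.ext fun x => ?_
    obtain ⟨i, y⟩ := x
    simp [Equiv.Perm.mul_apply, permOfTuple, permOfRot, Equiv.prodShear, cyclicRot_apply,
      add_sub_cancel_right]
  simp only [MonoidHom.comp_apply, MulEquiv.coe_toMonoidHom, MulAut.conj_apply]
  rw [← key, mul_assoc, mul_inv_cancel, mul_one]

def sdPermHom (e : W →* Equiv.Perm X) :
    ((ZMod p → W) ⋊[cyclicRot p W] Multiplicative (ZMod p)) →* Equiv.Perm (ZMod p × X) :=
  SemidirectProduct.lift (permOfTuple p W X e) (permOfRot p X) (permCompat p W X e)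

lemma sdPermHom_injective [Nonempty X] (e : W →* Equiv.Perm X)
    (he : Function.Injective e) : Function.Injective (sdPermHom p W X e) := by
  refine (injective_iff_map_eq_one _).mpr fun a ha => ?_
  obtain ⟨f, z⟩ := a
  rw [SemidirectProduct.mk_eq_inl_mul_inr, map_mul, sdPermHom, SemidirectProduct.lift_inl,
    SemidirectProduct.lift_inr] at ha
  have hval : ∀ (i : ZMod p) (y : X), ((i + z.toAdd : ZMod p), e (f (i + z.toAdd)) y) = (i, y) := by
    intro i y
    have h := Equiv.ext_iff.mp ha (i, y)
    simpa [Equiv.Perm.mul_apply, permOfTuple, permOfRot, Equiv.prodShear] using h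
  obtain ⟨y⟩ := ‹Nonempty X›
  have hz : z.toAdd = 0 := by
    have h := congrArg Prod.fst (hval 0 y)
    simpa using h
  have hf : ∀ i, f i = 1 := by
    intro i
    refine he ?_
    rw [map_one]
    refine Equiv.ext fun y' => ?_
    have h := congrArg Prod.snd (hval i y')
    simpa [hz] using h
  have hz1 : z = 1 := by
    have : z = Multiplicative.ofAdd z.toAdd := rfl
    rw [this, hz]
    rfl
  ext <;> simp [hf, hz1]

end Perm

-- ===================== the recursive embedding =====================

def permCongrHom {α β : Type*} (E : α ≃ β) : Equiv.Perm α →* Equiv.Perm β where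
  toFun σ := E.permCongr σ
  map_one' := by ext b; simp
  map_mul' σ τ := by ext b; simp [Equiv.Perm.mul_apply]

section IWperm

variable (p : ℕ) [NeZero p]

noncomputable def prodFinEquiv (k : ℕ) : (ZMod p × Fin (p ^ k)) ≃ Fin (p ^ (k + 1)) := by
  refine Fintype.equivFinOfCardEq ?_
  simp [ZMod.card, pow_succ, mul_comm]

noncomputable def iwPerm : ∀ k, IW p k →* Equiv.Perm (Fin (p ^ k))
  | 0 => 1
  | (k+1) =>
    (permCongrHom (prodFinEquiv p k)).comp
      (sdPermHom p (IW p k) (Fin (p ^ k)) (iwPerm k))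

lemma iwPerm_inj : ∀ k, Function.Injective (iwPerm p k)
  | 0 => by
    haveI : Subsingleton (IW p 0) := inferInstanceAs (Subsingleton PUnit)
    exact fun a b _ => Subsingleton.elim a b
  | (k+1) => by
    haveI : Nonempty (Fin (p ^ k)) :=
      ⟨⟨0, pow_pos (Nat.pos_of_ne_zero (NeZero.ne p)) k⟩⟩
    have hrfl : iwPerm p (k+1) = (permCongrHom (prodFinEquiv p k)).comp
        (sdPermHom p (IW p k) (Fin (p ^ k)) (iwPerm p k)) := rfl
    rw [hrfl]
    exact Function.Injective.comp (g := ⇑(permCongrHom (prodFinEquiv p k)))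
      (fun _ _ h => (prodFinEquiv p k).permCongr.injective h)
      (sdPermHom_injective p (IW p k) (Fin (p ^ k)) (iwPerm p k) (iwPerm_inj k))

lemma card_sd (W : Type*) [Group W] :
    Nat.card ((ZMod p → W) ⋊[cyclicRot p W] Multiplicative (ZMod p))
      = Nat.card ((ZMod p → W) × Multiplicative (ZMod p)) :=
  Nat.card_congr ⟨fun a => (a.left, a.right), fun x => ⟨x.1, x.2⟩,
    fun a => by cases a; rfl, fun x => rfl⟩

lemma card_IW : ∀ k, Nat.card (IW p k) = p ^ (∑ i ∈ Finset.range k, p ^ i)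
  | 0 => by
    show Nat.card PUnit = _
    simp
  | (k+1) => by
    have e1 : Nat.card (IW p (k+1))
        = Nat.card ((ZMod p → IW p k) × Multiplicative (ZMod p)) := by
      exact card_sd p (IW p k)
    haveI : Finite (IW p k) := Nat.finite_of_card_ne_zero (by
      rw [card_IW k]
      exact pow_ne_zero _ (NeZero.ne p))
    have hm : Nat.card (Multiplicative (ZMod p)) = p :=
      (Nat.card_congr Multiplicative.toAdd).trans (Nat.card_zmod p)
    rw [e1, Nat.card_prod, Nat.card_fun, hm, Nat.card_zmod, card_IW k]
    rw [← pow_mul, ← pow_succ]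
    congr 1
    rw [Finset.sum_range_succ']
    simp [pow_succ, ← Finset.sum_mul]

lemma factorization_pow_factorial (hp : p.Prime) :
    ∀ k, (Nat.factorial (p ^ k)).factorization p = ∑ i ∈ Finset.range k, p ^ i
  | 0 => by simp
  | (k+1) => by
    haveI : Fact p.Prime := ⟨hp⟩
    rw [Nat.factorization_def _ hp, pow_succ']
    rw [padicValNat_factorial_mul]
    rw [← Nat.factorization_def _ hp, factorization_pow_factorial hp k,
      Finset.sum_range_succ]

end IWperm


/-- A Sylow `p`-subgroup `P` of `S_{p^k}` has exactly `p^k` linear characters; equivalently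
the abelianization of the `k`-fold iterated wreath product `C_p ≀ ⋯ ≀ C_p` is `(C_p)^{×k}`. -/
theorem card_linChar_sylow (p k : ℕ) [Fact p.Prime] (hk : 1 ≤ k)
    (P : Sylow p (Equiv.Perm (Fin (p ^ k)))) :
    Nat.card (↥(P : Subgroup (Equiv.Perm (Fin (p ^ k)))) →* ℂˣ) = p ^ k ∧
    Nonempty (Abelianization (IW p k) ≃* (Fin k → Multiplicative (ZMod p))) := by
  haveI : NeZero p := ⟨(Fact.out : p.Prime).ne_zero⟩
  set G := Equiv.Perm (Fin (p ^ k)) with hG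
  let H : Subgroup G := (iwPerm p k).range
  have hcard : Nat.card H = p ^ (∑ i ∈ Finset.range k, p ^ i) := by
    rw [← card_IW p k]
    exact Nat.card_congr (MonoidHom.ofInjective (iwPerm_inj p k)).toEquiv.symm
  have hpH : IsPGroup p H := IsPGroup.of_card hcard
  obtain ⟨Q, hHQ⟩ := hpH.exists_le_sylow
  have hcardG : Nat.card G = (p ^ k).factorial := by
    rw [Nat.card_eq_fintype_card, Fintype.card_perm, Fintype.card_fin]
  have hcardQ : Nat.card Q = p ^ (∑ i ∈ Finset.range k, p ^ i) := by
    rw [Q.card_eq_multiplicity, hcardG, factorization_pow_factorial p Fact.out k]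
  have hEq : H = (Q : Subgroup G) :=
    Subgroup.eq_of_le_of_card_ge hHQ (le_of_eq (hcardQ.trans hcard.symm))
  let e1 : ↥(P : Subgroup G) ≃* ↥(Q : Subgroup G) := Sylow.equiv P Q
  let e2 : ↥(Q : Subgroup G) ≃* ↥H := MulEquiv.subgroupCongr hEq.symm
  let e3 : ↥H ≃* IW p k := (MonoidHom.ofInjective (iwPerm_inj p k)).symm
  let e : ↥(P : Subgroup G) ≃* IW p k := (e1.trans e2).trans e3
  have eab : Abelianization ↥(P : Subgroup G) ≃* (Fin k → Multiplicative (ZMod p)) :=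
    e.abelianizationCongr.trans (abIW p k)
  refine ⟨?_, ⟨abIW p k⟩⟩
  have c1 : Nat.card (↥(P : Subgroup G) →* ℂˣ)
      = Nat.card (Abelianization ↥(P : Subgroup G) →* ℂˣ) :=
    Nat.card_congr Abelianization.lift
  haveI : Finite (Abelianization ↥(P : Subgroup G)) := Quotient.finite _
  haveI : NeZero ((Monoid.exponent (Abelianization ↥(P : Subgroup G)) : ℕ) : ℂ) :=
    ⟨Nat.cast_ne_zero.mpr Monoid.exponent_ne_zero_of_finite⟩
  obtain ⟨d⟩ := CommGroup.monoidHom_mulEquiv_of_hasEnoughRootsOfUnity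
    (Abelianization ↥(P : Subgroup G)) ℂ
  have c2 : Nat.card (Abelianization ↥(P : Subgroup G) →* ℂˣ)
      = Nat.card (Abelianization ↥(P : Subgroup G)) := Nat.card_congr d.toEquiv
  have c3 : Nat.card (Abelianization ↥(P : Subgroup G)) = p ^ k := by
    rw [Nat.card_congr eab.toEquiv, Nat.card_fun]
    have hm : Nat.card (Multiplicative (ZMod p)) = p :=
      (Nat.card_congr Multiplicative.toAdd).trans (Nat.card_zmod p)
    rw [hm, Nat.card_eq_fintype_card, Fintype.card_fin]
  rw [c1, c2, c3]
end
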